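/- Let P ⊆ ℝ^d be a full-dimensional simple convex polytope with n facets, normal fan Σ_P and ray matrix U of rank d, and let Δ be a face of P of dimension ℓ with n_Δ facets. Let Δ^c be the set of facets Q of P with Q ∩ Δ = ∅. Then for each k there is an injective map F_k(A_Δ) ↪ F_{k+|Δ^c|}(A_P): explicitly, if a k-plane Λ ⊆ A_Δ ⊆ ℙ^{n_Δ−1} is cut out by n_Δ − k − 1 linear equations in the variables x_Q with Q ∩ Δ a facet of Δ, then the same equations cut out a linear subspace Λ′ of dimension k + |Δ^c| inside Λ_Δ ≅ ℙ^{n−1−(d−ℓ)}, and Λ′ is contained in A_P. -/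

import Mathlib

open MvPolynomial Finset MeasureTheory
open scoped ENNReal

/-- The polyhedral cone spanned by the ray generators (rows of `U`) indexed by `σ`. -/
def coneOf {ι κ : Type*} [Fintype ι] (U : Matrix ι κ ℝ) (σ : Finset ι) : Set (κ → ℝ) :=
  {y | ∃ c : ι → ℝ, (∀ i, 0 ≤ c i) ∧ (∀ i, i ∉ σ → c i = 0) ∧ y = ∑ i, c i • U i}

/-- A simplicial polyhedral fan with rays indexed by `ι`, living in the space `κ → ℝ`.
Since the fan is simplicial, each cone is recorded by its finite set of rays. -/
structure SimplicialFan (ι κ : Type*) [Fintype ι] [DecidableEq ι] where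
  /-- the ray generator matrix: its rows are the chosen ray generators -/
  U : Matrix ι κ ℝ
  /-- the cones of the fan, each recorded by its set of rays -/
  cones : Finset (Finset ι)
  empty_mem : ∅ ∈ cones
  ray_mem : ∀ i : ι, {i} ∈ cones
  downward : ∀ σ ∈ cones, ∀ τ, τ ⊆ σ → τ ∈ cones
  indep : ∀ σ ∈ cones, LinearIndependent ℝ (fun i : σ => U i.1)
  inter : ∀ σ ∈ cones, ∀ τ ∈ cones, coneOf U σ ∩ coneOf U τ = coneOf U (σ ∩ τ)

/-- `|det|` of the square submatrix of `U` on the rows indexed by `σ`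
(zero if `σ` does not have exactly `card κ` elements). -/
noncomputable def absDetRows {ι κ : Type*} [Fintype κ] [DecidableEq κ]
    (U : Matrix ι κ ℝ) (σ : Finset ι) : ℝ :=
  if h : σ.card = Fintype.card κ then
    |(Matrix.of fun j k : κ =>
        U ((σ.equivFin.symm (Fintype.equivFinOfCardEq h.symm j)) : ι) k).det|
  else 0

/-- The universal adjoint polynomial of the fan data `(U, cones)`:
`Adj = ∑_{σ ∈ Σ(d)} |det U_σ| ∏_{ρ ∉ σ(1)} x_ρ`. -/
noncomputable def Adj {ι κ : Type*} [Fintype ι] [DecidableEq ι] [Fintype κ] [DecidableEq κ]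
    (U : Matrix ι κ ℝ) (cones : Finset (Finset ι)) : MvPolynomial ι ℝ :=
  ∑ σ ∈ cones.filter fun σ => σ.card = Fintype.card κ,
    MvPolynomial.C (absDetRows U σ) * ∏ ρ ∈ σᶜ, MvPolynomial.X ρ

/-- The toric amplitude `Amp = ∑_{σ ∈ Σ(d)} |det U_σ| / ∏_{ρ ∈ σ(1)} x_ρ`
as a real-valued function. -/
noncomputable def Amp {ι κ : Type*} [Fintype ι] [DecidableEq ι] [Fintype κ] [DecidableEq κ]
    (U : Matrix ι κ ℝ) (cones : Finset (Finset ι)) (x : ι → ℝ) : ℝ :=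
  ∑ σ ∈ cones.filter fun σ => σ.card = Fintype.card κ, absDetRows U σ / ∏ ρ ∈ σ, x ρ

/-- The toric amplitude with values in `ℝ≥0∞` (for identities with possibly infinite
dual volumes). -/
noncomputable def AmpE {ι κ : Type*} [Fintype ι] [DecidableEq ι] [Fintype κ] [DecidableEq κ]
    (U : Matrix ι κ ℝ) (cones : Finset (Finset ι)) (x : ι → ℝ) : ℝ≥0∞ :=
  ∑ σ ∈ cones.filter fun σ => σ.card = Fintype.card κ,
    ENNReal.ofReal (absDetRows U σ) / ∏ ρ ∈ σ, ENNReal.ofReal (x ρ)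

/-- The toric amplitude as an element of the field of rational functions. -/
noncomputable def AmpFrac {ι κ : Type*} [Fintype ι] [DecidableEq ι] [Fintype κ] [DecidableEq κ]
    (U : Matrix ι κ ℝ) (cones : Finset (Finset ι)) : FractionRing (MvPolynomial ι ℝ) :=
  ∑ σ ∈ cones.filter fun σ => σ.card = Fintype.card κ,
    algebraMap (MvPolynomial ι ℝ) (FractionRing (MvPolynomial ι ℝ)) (MvPolynomial.C (absDetRows U σ)) /
      algebraMap (MvPolynomial ι ℝ) (FractionRing (MvPolynomial ι ℝ)) (∏ ρ ∈ σ, MvPolynomial.X ρ)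

/-- The toric amplitude of fan data whose rays are indexed by a type `α` mapping to `ι`
via `f`, viewed inside the rational function field on the `ι`-variables. -/
noncomputable def AmpFracVia {α ι κ' : Type*} [Fintype α] [DecidableEq α]
    [Fintype κ'] [DecidableEq κ']
    (U' : Matrix α κ' ℝ) (cones' : Finset (Finset α)) (f : α → ι) :
    FractionRing (MvPolynomial ι ℝ) :=
  ∑ σ ∈ cones'.filter fun σ => σ.card = Fintype.card κ',
    algebraMap (MvPolynomial ι ℝ) (FractionRing (MvPolynomial ι ℝ)) (MvPolynomial.C (absDetRows U' σ)) /
      algebraMap (MvPolynomial ι ℝ) (FractionRing (MvPolynomial ι ℝ)) (∏ ρ ∈ σ, MvPolynomial.X (f ρ))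

/-- The polyhedron `P_z = {y : U y + z ≥ 0}`. -/
def Pz {ι κ : Type*} [Fintype κ] (U : Matrix ι κ ℝ) (z : ι → ℝ) : Set (κ → ℝ) :=
  {y | ∀ i, 0 ≤ (∑ j, U i j * y j) + z i}

/-- The face of `P_z` where the inequalities indexed by `τ` are tight. -/
def faceOf {ι κ : Type*} [Fintype κ] (U : Matrix ι κ ℝ) (z : ι → ℝ) (τ : Finset ι) :
    Set (κ → ℝ) :=
  {y | y ∈ Pz U z ∧ ∀ i ∈ τ, (∑ j, U i j * y j) + z i = 0}

/-- `F` is the normal fan of the polytope `P_z`, which is a full-dimensional simple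
(bounded) polytope whose facets are indexed by the rays of `F`: a set of inequalities
spans a cone of the normal fan iff they are simultaneously tight on a nonempty face. -/
def IsNormalFanOf {ι κ : Type*} [Fintype ι] [DecidableEq ι] [Fintype κ]
    (F : SimplicialFan ι κ) (z : ι → ℝ) : Prop :=
  Bornology.IsBounded (Pz F.U z) ∧ (interior (Pz F.U z)).Nonempty ∧
    ∀ σ : Finset ι, σ ∈ F.cones ↔ (faceOf F.U z σ).Nonempty

/-- The polar dual `{u : u ⬝ y ≥ -1 for all y ∈ P}`. -/
def polarDual {κ : Type*} [Fintype κ] (P : Set (κ → ℝ)) : Set (κ → ℝ) :=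
  {u | ∀ y ∈ P, -1 ≤ ∑ j, u j * y j}

/-- Warren's adjoint polynomial `adj_{P_z}(y) = Adj(U y + z)`. -/
noncomputable def warrenAdj {ι κ : Type*} [Fintype ι] [DecidableEq ι] [Fintype κ] [DecidableEq κ]
    (U : Matrix ι κ ℝ) (cones : Finset (Finset ι)) (z : ι → ℝ) : MvPolynomial κ ℝ :=
  MvPolynomial.aeval (fun i : ι => (∑ j, MvPolynomial.C (U i j) * MvPolynomial.X j) + MvPolynomial.C (z i))
    (Adj U cones)

/-- The neighbours `nb(τ)` of a cone `τ`: rays `ρ ∉ τ` with `τ ∪ {ρ}` a cone. -/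
def nbF {ι : Type*} [Fintype ι] [DecidableEq ι] (cones : Finset (Finset ι)) (τ : Finset ι) :
    Finset ι :=
  Finset.univ.filter fun ρ => ρ ∉ τ ∧ insert ρ τ ∈ cones

/-- The rows of `U * T` indexed by `τ` are the first `k` standard basis vectors. -/
def RowsStd {ι : Type*} {d : ℕ} (U : Matrix ι (Fin d) ℝ) (T : Matrix (Fin d) (Fin d) ℝ)
    (τ : Finset ι) (k : ℕ) : Prop :=
  ∃ g : {ρ : ι // ρ ∈ τ} → Fin d, Function.Injective g ∧ (∀ ρ, (g ρ : ℕ) < k) ∧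
    ∀ ρ : {ρ : ι // ρ ∈ τ}, (U * T) ρ.1 = Pi.single (g ρ) 1

/-- The ray matrix of the star fan `Σ_τ`: the last `d-k` columns of `U * T`, on the
rows indexed by `nb(τ)` (here `N`). -/
def starU {ι : Type*} {d : ℕ} (U : Matrix ι (Fin d) ℝ) (T : Matrix (Fin d) (Fin d) ℝ)
    (N : Finset ι) (k : ℕ) : Matrix {ρ : ι // ρ ∈ N} {j : Fin d // k ≤ (j : ℕ)} ℝ :=
  fun ρ j => (U * T) ρ.1 j.1

/-- The cones of the star fan `Σ_τ`, recorded by their sets of rays (as subsets of `N = nb(τ)`). -/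
def starCones {ι : Type*} [DecidableEq ι] (cones : Finset (Finset ι)) (τ : Finset ι)
    (N : Finset ι) : Finset (Finset {ρ : ι // ρ ∈ N}) :=
  (cones.filter fun σ => τ ⊆ σ).image fun σ => (σ \ τ).subtype fun ρ => ρ ∈ N

/-- Restriction of polynomials to the coordinate subspace `Λ_τ = {x_ρ = 0, ρ ∈ τ}`. -/
noncomputable def restrictTo {ι : Type*} {R : Type*} [CommSemiring R] [DecidableEq ι]
    (τ : Finset ι) : MvPolynomial ι R →ₐ[R] MvPolynomial ι R :=
  MvPolynomial.aeval fun ρ => if ρ ∈ τ then 0 else MvPolynomial.X ρ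

/-- The deformation cone of a (complete simplicial) fan: those `x` for which each
"virtual vertex" of `P_x` determined by a maximal cone satisfies all inequalities. -/
def DefCone {ι κ : Type*} [Fintype ι] [DecidableEq ι] [Fintype κ] (F : SimplicialFan ι κ) :
    Set (ι → ℝ) :=
  {x | ∀ σ ∈ F.cones, σ.card = Fintype.card κ →
    ∃ v : κ → ℝ, (∀ ρ ∈ σ, (∑ j, F.U ρ j * v j) + x ρ = 0) ∧
      ∀ ρ : ι, 0 ≤ (∑ j, F.U ρ j * v j) + x ρ}

/-- The `(d+1) × (d+1)` determinant `W_Δ(x)` of the matrix with rows `(u_ρ, x_ρ)`,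
`ρ ∈ S` (defined up to sign; zero if `S` does not have `d+1` elements). -/
noncomputable def Wdet {ι κ : Type*} [Fintype κ] [DecidableEq κ]
    (U : Matrix ι κ ℝ) (S : Finset ι) (x : ι → ℝ) : ℝ :=
  if h : S.card = Fintype.card (Option κ) then
    (Matrix.of fun a b : Option κ =>
      Option.elim b (x ((S.equivFin.symm (Fintype.equivFinOfCardEq h.symm a)) : ι))
        (fun k => U ((S.equivFin.symm (Fintype.equivFinOfCardEq h.symm a)) : ι) k)).det
  else 0

/-- The linear-algebra map behind the embedding `F_k(A_Δ) ↪ F_{k+|Δᶜ|}(A_P)`: it sends a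
linear subspace `W` of the coordinates indexed by `N = nb(τ)` to the subspace of `ℂ^ι`
cut out by the equations of `W` (in the `N`-coordinates) together with `x_ρ = 0, ρ ∈ τ`. -/
noncomputable def faceEmbedMap {ι : Type*} (τ N : Finset ι)
    (W : Submodule ℂ ({ρ : ι // ρ ∈ N} → ℂ)) : Submodule ℂ (ι → ℂ) :=
  W.comap (LinearMap.funLeft ℂ ℂ (Subtype.val : {ρ : ι // ρ ∈ N} → ι)) ⊓
    ⨅ ρ ∈ τ, LinearMap.ker (LinearMap.proj (R := ℂ) (φ := fun _ : ι => ℂ) ρ)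

/-!
Adj_P vanishes on Λ_Δ term by term unless the vertex cone σ contains the normal cone τ of Δ,
and the surviving vertices of P are exactly the vertices of Δ, with σ ↦ σ \ τ the
corresponding maximal cone of the star fan. After the base change T, which turns the rows
of τ into standard basis vectors, the block-triangular shape of U_σ T gives
|det U_σ| · |det T| = |det U_{Δ, σ \ τ}|, while the monomials of the two adjoints differ by
the product of the x_Q over the facets Q disjoint from Δ. So on Λ_Δ the polynomial Adj_P is
a multiple of Adj_Δ and vanishes wherever Adj_Δ does. The dimension count is coordinate
bookkeeping: the equations of W in the N-coordinates and x_τ = 0 leave the coordinates of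
the facets disjoint from Δ free.
-/

section FaceEmbedding

variable {ι : Type*} {τ N : Finset ι}

lemma mem_faceEmbedMap {W : Submodule ℂ ({ρ : ι // ρ ∈ N} → ℂ)} {x : ι → ℂ} :
    x ∈ faceEmbedMap τ N W ↔ (fun b : {ρ : ι // ρ ∈ N} => x b) ∈ W ∧ ∀ ρ ∈ τ, x ρ = 0 := by
  simp only [faceEmbedMap, Submodule.mem_inf, Submodule.mem_comap, Submodule.mem_iInf,
    LinearMap.mem_ker, LinearMap.proj_apply]
  rfl

lemma comap_extendByZero_faceEmbedMap (h : Disjoint τ N)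
    (W : Submodule ℂ ({ρ : ι // ρ ∈ N} → ℂ)) :
    (faceEmbedMap τ N W).comap (Function.ExtendByZero.linearMap ℂ Subtype.val) = W := by
  ext w
  simp only [Submodule.mem_comap, mem_faceEmbedMap, Function.ExtendByZero.linearMap_apply,
    Subtype.val_injective.extend_apply]
  refine and_iff_left_of_imp fun _ ρ hρ => ?_
  rw [Function.extend_val_apply' (Finset.disjoint_left.1 h hρ), Pi.zero_apply]

lemma faceEmbedMap_injective (h : Disjoint τ N) : Function.Injective (faceEmbedMap τ N) :=
  Function.LeftInverse.injective (comap_extendByZero_faceEmbedMap h)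

variable [Fintype ι] [DecidableEq ι]

noncomputable def faceEmbedMapEquiv (h : Disjoint τ N)
    (W : Submodule ℂ ({ρ : ι // ρ ∈ N} → ℂ)) :
    faceEmbedMap τ N W ≃ₗ[ℂ] W × ({ρ : ι // ρ ∈ (N ∪ τ)ᶜ} → ℂ) where
  toFun x := (⟨fun b => x.1 b, (mem_faceEmbedMap.1 x.2).1⟩, fun b => x.1 b)
  map_add' _ _ := rfl
  map_smul' _ _ := rfl
  invFun ws := ⟨Function.extend Subtype.val ws.1.1 0 + Function.extend Subtype.val ws.2 0, by
    refine mem_faceEmbedMap.2 ⟨?_, fun ρ hρ => ?_⟩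
    · convert ws.1.2 using 1
      funext b
      simp
    · simp [hρ, Finset.disjoint_left.1 h hρ]⟩
  left_inv x := by
    ext ρ
    by_cases hN : ρ ∈ N
    · have hS : ρ ∉ (N ∪ τ)ᶜ := by simp [hN]
      simp [Function.extend_val_apply hN, Function.extend_val_apply' hS]
    by_cases hS : ρ ∈ (N ∪ τ)ᶜ
    · simp [hN, Function.extend_val_apply hS]
    have hτ : ρ ∈ τ := by simpa [hN] using hS
    simp [hN, Function.extend_val_apply' hS, (mem_faceEmbedMap.1 x.2).2 ρ hτ]
  right_inv ws := by
    ext b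
    · simp
    · have hN : (b : ι) ∉ N := fun hN => by simpa [hN] using b.2
      simp [hN]

lemma finrank_faceEmbedMap (h : Disjoint τ N) (W : Submodule ℂ ({ρ : ι // ρ ∈ N} → ℂ)) :
    Module.finrank ℂ (faceEmbedMap τ N W) = Module.finrank ℂ W + ((N ∪ τ)ᶜ).card := by
  rw [(faceEmbedMapEquiv h W).finrank_eq, Module.finrank_prod,
    Module.finrank_fintype_fun_eq_card, Fintype.card_coe]

end FaceEmbedding

section AbsDetRows

variable {ι κ : Type*} [Fintype κ] [DecidableEq κ]

lemma absDetRows_eq_abs_det (U : Matrix ι κ ℝ) (σ : Finset ι) (e : κ ≃ {ρ : ι // ρ ∈ σ}) :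
    absDetRows U σ = |(Matrix.of fun j l : κ => U (e j) l).det| := by
  have h : σ.card = Fintype.card κ := by rw [Fintype.card_congr e, Fintype.card_coe]
  rw [absDetRows, dif_pos h, ← Matrix.abs_det_submatrix_equiv_equiv (R := ℝ)
    (e.trans (σ.equivFin.trans (Fintype.equivFinOfCardEq h.symm).symm)) (Equiv.refl κ)]
  congr 2
  ext j l
  simp

lemma absDetRows_mul (U : Matrix ι κ ℝ) (T : Matrix κ κ ℝ) (σ : Finset ι) :
    absDetRows (U * T) σ = absDetRows U σ * |T.det| := by
  unfold absDetRows
  split_ifs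
  · rw [← abs_mul, ← Matrix.det_mul]
    rfl
  · rw [zero_mul]

lemma absDetRows_submatrix_subtype [DecidableEq ι] (U : Matrix ι κ ℝ) {N s : Finset ι}
    (hs : s ⊆ N) :
    absDetRows (U.submatrix (Subtype.val : {ρ : ι // ρ ∈ N} → ι) id) (s.subtype (· ∈ N)) =
      absDetRows U s := by
  let E : {x // x ∈ s.subtype (· ∈ N)} ≃ {ρ : ι // ρ ∈ s} :=
    (Equiv.subtypeEquivRight fun _ => Finset.mem_subtype).trans
      (Equiv.subtypeSubtypeEquivSubtype fun h => hs h)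
  by_cases h : s.card = Fintype.card κ
  · have e : κ ≃ {x // x ∈ s.subtype (· ∈ N)} :=
      Fintype.equivOfCardEq (by rw [Fintype.card_congr E, Fintype.card_coe, h])
    rw [absDetRows_eq_abs_det _ _ e, absDetRows_eq_abs_det _ _ (e.trans E)]
    rfl
  · have h' : (s.subtype (· ∈ N)).card ≠ Fintype.card κ := by
      rwa [← Fintype.card_coe, Fintype.card_congr E, Fintype.card_coe]
    simp only [absDetRows, dif_neg h, dif_neg h']

lemma absDetRows_eq_of_rows_single [DecidableEq ι] (M : Matrix ι κ ℝ) (p : κ → Prop)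
    [DecidablePred p] {τ σ : Finset ι} (hτσ : τ ⊆ σ) (g : {ρ : ι // ρ ∈ τ} ≃ {j : κ // ¬ p j})
    (hrow : ∀ ρ : {ρ : ι // ρ ∈ τ}, M ρ = Pi.single (g ρ : κ) 1) :
    absDetRows M σ = absDetRows (M.submatrix id (Subtype.val : {j : κ // p j} → κ)) (σ \ τ) := by
  have hτ : τ.card + Fintype.card {j : κ // p j} = Fintype.card κ := by
    rw [← Fintype.card_coe τ, Fintype.card_congr g, Fintype.card_subtype_compl]
    have := Fintype.card_subtype_le p
    omega
  have hσ : (σ \ τ).card + τ.card = σ.card := Finset.card_sdiff_add_card_eq_card hτσ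
  by_cases hcard : (σ \ τ).card = Fintype.card {j : κ // p j}
  swap
  · have : σ.card ≠ Fintype.card κ := by omega
    simp only [absDetRows, dif_neg hcard, dif_neg this]
  let e₂ : {j : κ // p j} ≃ {ρ : ι // ρ ∈ σ \ τ} :=
    Fintype.equivOfCardEq (by rw [Fintype.card_coe, hcard])
  -- `e` matches each column outside `p` with the row of `τ` carrying its basis vector, so the
  -- reindexed matrix is block triangular with an identity block
  let e : κ ≃ {ρ : ι // ρ ∈ σ} :=
    (Equiv.sumCompl p).symm.trans ((e₂.sumCongr g.symm).trans
      ((Equiv.Finset.union _ _ Finset.sdiff_disjoint).trans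
        (Equiv.subtypeEquivRight fun _ => by rw [Finset.sdiff_union_of_subset hτσ])))
  have e_pos : ∀ (j : κ) (hj : p j), (e j : ι) = e₂ ⟨j, hj⟩ := fun j hj => by
    simp [e, Equiv.sumCompl_symm_apply_of_pos hj]
  have e_neg : ∀ (j : κ) (hj : ¬ p j), M (e j) = Pi.single j 1 := fun j hj => by
    simp [e, Equiv.sumCompl_symm_apply_of_neg hj, hrow]
  rw [absDetRows_eq_abs_det M σ e, absDetRows_eq_abs_det _ _ e₂,
    Matrix.twoBlockTriangular_det _ p fun i hi j hj => ?_]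
  · have hone :
        Matrix.toSquareBlockProp (Matrix.of fun j l => M (e j) l) (fun j => ¬ p j) = 1 := by
      ext i j
      simp [Matrix.toSquareBlockProp_def, e_neg i i.2, Pi.single_apply, Matrix.one_apply,
        Subtype.ext_iff, eq_comm]
    rw [hone, Matrix.det_one, mul_one]
    congr 3
    ext i j
    simp [Matrix.toSquareBlockProp_def, e_pos i i.2]
  · have hji : j ≠ i := fun h => hi (h ▸ hj)
    simp [e_neg i hi, hji]

end AbsDetRows

lemma Fin.card_subtype_le_val (d k : ℕ) : Fintype.card {j : Fin d // k ≤ (j : ℕ)} = d - k := by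
  rw [← Fintype.card_fin (d - k)]
  exact Fintype.card_congr
    { toFun := fun j => ⟨j.1 - k, by omega⟩
      invFun := fun i => ⟨⟨i + k, by omega⟩, by simp⟩
      left_inv := fun j => by ext; simp; omega
      right_inv := fun i => by ext; simp }

section RowsStd

variable {ι : Type*} {d k : ℕ} {U : Matrix ι (Fin d) ℝ} {T : Matrix (Fin d) (Fin d) ℝ}
  {τ : Finset ι}

lemma RowsStd.card_le (hT : RowsStd U T τ k) : τ.card ≤ d := by
  obtain ⟨g, hg, -, -⟩ := hT
  simpa using Fintype.card_le_of_injective g hg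

lemma RowsStd.exists_equiv (hT : RowsStd U T τ τ.card) :
    ∃ g : {ρ : ι // ρ ∈ τ} ≃ {j : Fin d // ¬ τ.card ≤ (j : ℕ)},
      ∀ ρ : {ρ : ι // ρ ∈ τ}, (U * T) ρ = Pi.single (g ρ : Fin d) 1 := by
  have hcard : Fintype.card {j : Fin d // ¬ τ.card ≤ (j : ℕ)} = τ.card := by
    simp only [not_le]
    exact Fintype.card_fin_lt_of_le hT.card_le
  obtain ⟨g, hg, hlt, hrow⟩ := hT
  refine ⟨Equiv.ofBijective (fun ρ => ⟨g ρ, not_le.2 (hlt ρ)⟩)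
    ((Fintype.bijective_iff_injective_and_card _).2 ⟨fun a b h => hg ?_, ?_⟩), hrow⟩
  · exact congrArg Subtype.val h
  · rw [hcard, Fintype.card_coe]

lemma absDetRows_starU [DecidableEq ι] {σ N : Finset ι} (hτσ : τ ⊆ σ) (hσN : σ \ τ ⊆ N)
    (g : {ρ : ι // ρ ∈ τ} ≃ {j : Fin d // ¬ τ.card ≤ (j : ℕ)})
    (hrow : ∀ ρ : {ρ : ι // ρ ∈ τ}, (U * T) ρ = Pi.single (g ρ : Fin d) 1) :
    absDetRows (starU U T N τ.card) ((σ \ τ).subtype (· ∈ N)) = absDetRows U σ * |T.det| := by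
  calc absDetRows (starU U T N τ.card) ((σ \ τ).subtype (· ∈ N))
      = absDetRows ((U * T).submatrix id Subtype.val) (σ \ τ) :=
        absDetRows_submatrix_subtype ((U * T).submatrix id Subtype.val) hσN
    _ = absDetRows (U * T) σ := (absDetRows_eq_of_rows_single _ _ hτσ g hrow).symm
    _ = absDetRows U σ * |T.det| := absDetRows_mul U T σ

end RowsStd

section StarFan

variable {ι : Type*} [DecidableEq ι]

lemma disjoint_nbF [Fintype ι] (cones : Finset (Finset ι)) (τ : Finset ι) :
    Disjoint τ (nbF cones τ) :=
  Finset.disjoint_left.2 fun _ hρ hρN => (Finset.mem_filter.1 hρN).2.1 hρ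

lemma sdiff_subset_nbF [Fintype ι] {κ : Type*} (F : SimplicialFan ι κ) {τ σ : Finset ι}
    (hσ : σ ∈ F.cones) (hτσ : τ ⊆ σ) : σ \ τ ⊆ nbF F.cones τ := fun ρ hρ => by
  obtain ⟨hρσ, hρτ⟩ := Finset.mem_sdiff.1 hρ
  exact Finset.mem_filter.2
    ⟨Finset.mem_univ _, hρτ, F.downward σ hσ _ (Finset.insert_subset hρσ hτσ)⟩

lemma card_subtype_sdiff {τ σ N : Finset ι} (hτσ : τ ⊆ σ) (hσN : σ \ τ ⊆ N) :
    ((σ \ τ).subtype (· ∈ N)).card = σ.card - τ.card := by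
  rw [← Finset.card_map, Finset.subtype_map_of_mem hσN, Finset.card_sdiff_of_subset hτσ]

lemma sum_starCones_filter_card {M : Type*} [AddCommMonoid M] (cones : Finset (Finset ι))
    {τ N : Finset ι} (hN : ∀ σ ∈ cones, τ ⊆ σ → σ \ τ ⊆ N) (m : ℕ)
    (f : Finset {ρ : ι // ρ ∈ N} → M) :
    ∑ σ' ∈ (starCones cones τ N).filter (·.card = m), f σ' =
      ∑ σ ∈ cones.filter (fun σ => τ ⊆ σ ∧ σ.card - τ.card = m),
        f ((σ \ τ).subtype (· ∈ N)) := by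
  rw [starCones, Finset.filter_image, Finset.filter_filter, Finset.sum_image]
  · refine Finset.sum_congr (Finset.filter_congr fun σ hσ => and_congr_right fun hτσ => ?_)
      fun _ _ => rfl
    rw [card_subtype_sdiff hτσ (hN σ hσ hτσ)]
  · intro σ₁ hσ₁ σ₂ hσ₂ h
    obtain ⟨hσ₁, hτσ₁, -⟩ := Finset.mem_filter.1 (Finset.mem_coe.1 hσ₁)
    obtain ⟨hσ₂, hτσ₂, -⟩ := Finset.mem_filter.1 (Finset.mem_coe.1 hσ₂)
    have h' := congrArg (Finset.map (Function.Embedding.subtype (· ∈ N))) h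
    rw [Finset.subtype_map_of_mem (hN σ₁ hσ₁ hτσ₁),
      Finset.subtype_map_of_mem (hN σ₂ hσ₂ hτσ₂)] at h'
    rw [← Finset.sdiff_union_of_subset hτσ₁, ← Finset.sdiff_union_of_subset hτσ₂, h']

lemma prod_compl_eq_prod_mul_prod_subtype {ι M : Type*} [Fintype ι] [DecidableEq ι]
    [CommMonoid M] (x : ι → M) {τ σ N : Finset ι} (hτσ : τ ⊆ σ) (hσN : σ \ τ ⊆ N)
    (hτN : Disjoint τ N) :
    ∏ ρ ∈ σᶜ, x ρ = (∏ ρ ∈ (N ∪ τ)ᶜ, x ρ) * ∏ b ∈ ((σ \ τ).subtype (· ∈ N))ᶜ, x b := by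
  have hmap : ((σ \ τ).subtype (· ∈ N))ᶜ.map (Function.Embedding.subtype (· ∈ N)) = N \ σ := by
    ext ρ
    have := fun h : ρ ∈ τ => Finset.disjoint_left.1 hτN h
    by_cases hρ : ρ ∈ N <;> simp [hρ]
    tauto
  have hsplit : σᶜ = (N ∪ τ)ᶜ ∪ N \ σ := by
    ext ρ
    have h₁ := @hτσ ρ
    have h₂ := @hσN ρ
    simp only [Finset.mem_compl, Finset.mem_union, Finset.mem_sdiff] at h₂ ⊢
    tauto
  have hsub : ∏ b ∈ ((σ \ τ).subtype (· ∈ N))ᶜ, x b = ∏ ρ ∈ N \ σ, x ρ := by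
    rw [← hmap, Finset.prod_map]
    rfl
  rw [hsub, hsplit, Finset.prod_union (Finset.disjoint_left.2 fun ρ h₁ h₂ => by simp_all)]

lemma aeval_Adj {ι κ : Type*} [Fintype ι] [DecidableEq ι] [Fintype κ] [DecidableEq κ]
    (U : Matrix ι κ ℝ) (cones : Finset (Finset ι)) (x : ι → ℂ) :
    MvPolynomial.aeval x (Adj U cones) =
      ∑ σ ∈ cones.filter (·.card = Fintype.card κ),
        algebraMap ℝ ℂ (absDetRows U σ) * ∏ ρ ∈ σᶜ, x ρ := by
  simp [Adj, map_sum, map_mul, map_prod, MvPolynomial.aeval_X]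

end StarFan

/-- The restriction lemma `(Adj_P)|_{Λ_Δ} = c_Δ⁻¹ (∏_{Q ∩ Δ = ∅} x_Q) Adj_Δ`, with
`c_Δ = |det T|⁻¹`. -/
theorem abs_det_mul_aeval_Adj {ι : Type*} [Fintype ι] [DecidableEq ι] {d : ℕ}
    (F : SimplicialFan ι (Fin d)) {T : Matrix (Fin d) (Fin d) ℝ} {τ : Finset ι}
    (hT : RowsStd F.U T τ τ.card) {x : ι → ℂ} (hx : ∀ ρ ∈ τ, x ρ = 0) :
    algebraMap ℝ ℂ |T.det| * MvPolynomial.aeval x (Adj F.U F.cones) =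
      (∏ ρ ∈ (nbF F.cones τ ∪ τ)ᶜ, x ρ) *
        MvPolynomial.aeval (fun b : {ρ : ι // ρ ∈ nbF F.cones τ} => x b)
          (Adj (starU F.U T (nbF F.cones τ) τ.card) (starCones F.cones τ (nbF F.cones τ))) := by
  obtain ⟨g, hrow⟩ := hT.exists_equiv
  have hvanish : ∀ σ ∈ F.cones.filter (·.card = Fintype.card (Fin d)),
      algebraMap ℝ ℂ (absDetRows F.U σ) * ∏ ρ ∈ σᶜ, x ρ ≠ 0 → τ ⊆ σ := by
    intro σ _ hne
    by_contra hτσ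
    obtain ⟨ρ, hρτ, hρσ⟩ := Finset.not_subset.1 hτσ
    exact hne (by rw [Finset.prod_eq_zero (Finset.mem_compl.2 hρσ) (hx ρ hρτ), mul_zero])
  rw [aeval_Adj, aeval_Adj, ← Finset.sum_filter_of_ne hvanish, Finset.filter_filter,
    Finset.mul_sum, Finset.mul_sum, Fin.card_subtype_le_val,
    sum_starCones_filter_card F.cones (fun σ hσ hτσ => sdiff_subset_nbF F hσ hτσ)]
  refine Finset.sum_congr (Finset.filter_congr fun σ _ => ?_) fun σ hσ => ?_
  · refine ⟨fun ⟨hσd, hτσ⟩ => ⟨hτσ, by rw [hσd, Fintype.card_fin]⟩,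
      fun ⟨hτσ, hσd⟩ => ⟨?_, hτσ⟩⟩
    have := Finset.card_le_card hτσ
    have := hT.card_le
    rw [Fintype.card_fin]
    omega
  · obtain ⟨hσ, hτσ, -⟩ := Finset.mem_filter.1 hσ
    have hσN := sdiff_subset_nbF F hσ hτσ
    rw [absDetRows_starU hτσ hσN g hrow,
      prod_compl_eq_prod_mul_prod_subtype x hτσ hσN (disjoint_nbF _ _), map_mul]
    ring

theorem statement11_general {ι : Type*} [Fintype ι] [DecidableEq ι] {d k : ℕ}
    (F : SimplicialFan ι (Fin d))
    (τ : Finset ι) (hcard : τ.card = k)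
    (T : Matrix (Fin d) (Fin d) ℝ) (hdet : T.det ≠ 0) (hT : RowsStd F.U T τ k) :
    Function.Injective (faceEmbedMap τ (nbF F.cones τ)) ∧
    (∀ W : Submodule ℂ ({ρ : ι // ρ ∈ nbF F.cones τ} → ℂ),
      Module.finrank ℂ (faceEmbedMap τ (nbF F.cones τ) W) =
        Module.finrank ℂ W + ((nbF F.cones τ ∪ τ)ᶜ).card) ∧
    ∀ W : Submodule ℂ ({ρ : ι // ρ ∈ nbF F.cones τ} → ℂ),
      (∀ w ∈ W, MvPolynomial.aeval w
          (Adj (starU F.U T (nbF F.cones τ) k) (starCones F.cones τ (nbF F.cones τ))) = 0) →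
      ∀ x ∈ faceEmbedMap τ (nbF F.cones τ) W,
        MvPolynomial.aeval x (Adj F.U F.cones) = 0 := by
  subst hcard
  refine ⟨faceEmbedMap_injective (disjoint_nbF _ _), finrank_faceEmbedMap (disjoint_nbF _ _),
    fun W hW x hx => ?_⟩
  obtain ⟨hxW, hxτ⟩ := mem_faceEmbedMap.1 hx
  have h := abs_det_mul_aeval_Adj F hT hxτ
  rw [hW _ hxW, mul_zero] at h
  exact (mul_eq_zero.1 h).resolve_left (by simpa using hdet)

/-- (Fano schemes of faces embed.) Let `Δ` be the face of the simple
polytope `P` with normal cone `τ`, let `N = nb(τ)` index the facets of `Δ`, and let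
`Δᶜ = (N ∪ τ)ᶜ` index the facets of `P` disjoint from `Δ`. The map sending a linear
subspace of `ℙ^{n_Δ-1}` (given by equations in the variables `x_Q`, `Q ∩ Δ` a facet
of `Δ`) to the subspace of `Λ_Δ ⊆ ℙ^{n-1}` cut out by the same equations is injective,
raises dimension by exactly `|Δᶜ|`, and sends subspaces contained in `A_Δ` to subspaces
contained in `A_P`; hence for each `k` it induces an injection
`F_k(A_Δ) ↪ F_{k+|Δᶜ|}(A_P)`. -/
theorem statement11 {ι : Type*} [Fintype ι] [DecidableEq ι] {d k : ℕ}
    (F : SimplicialFan ι (Fin d)) (hrank : F.U.rank = d)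
    (z : ι → ℝ) (hz : IsNormalFanOf F z)
    (τ : Finset ι) (hτ : τ ∈ F.cones) (hcard : τ.card = k)
    (T : Matrix (Fin d) (Fin d) ℝ) (hdet : T.det ≠ 0) (hT : RowsStd F.U T τ k) :
    Function.Injective (faceEmbedMap τ (nbF F.cones τ)) ∧
    (∀ W : Submodule ℂ ({ρ : ι // ρ ∈ nbF F.cones τ} → ℂ),
      Module.finrank ℂ (faceEmbedMap τ (nbF F.cones τ) W) =
        Module.finrank ℂ W + ((nbF F.cones τ ∪ τ)ᶜ).card) ∧
    ∀ W : Submodule ℂ ({ρ : ι // ρ ∈ nbF F.cones τ} → ℂ),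
      (∀ w ∈ W, MvPolynomial.aeval w
          (Adj (starU F.U T (nbF F.cones τ) k) (starCones F.cones τ (nbF F.cones τ))) = 0) →
      ∀ x ∈ faceEmbedMap τ (nbF F.cones τ) W,
        MvPolynomial.aeval x (Adj F.U F.cones) = 0 :=
  statement11_general F τ hcard T hdet hT
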